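/- Let A ⊆ ℝⁿ be nonempty and closed, S ⊇ A, and suppose A is S-convex. If s ∈ S is such that the set [proj_A(s), s] (the union of all segments [a, s] with a ∈ proj_A(s)) is contained in S, then s has a unique closest point in A. -/

import Mathlib

open Metric Set

/-- The set of closest points of `A` to `x`. -/
def projSet {n : ℕ} (A : Set (EuclideanSpace ℝ (Fin n)))
    (x : EuclideanSpace ℝ (Fin n)) : Set (EuclideanSpace ℝ (Fin n)) :=
  {a ∈ A | dist x a = Metric.infDist x A}

/-- The proximal normal cone to `A` at `a`. -/
def proxNormalCone {n : ℕ} (A : Set (EuclideanSpace ℝ (Fin n)))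
    (a : EuclideanSpace ℝ (Fin n)) : Set (EuclideanSpace ℝ (Fin n)) :=
  {ζ | ∃ σ : ℝ, 0 ≤ σ ∧ ∀ y ∈ A, (inner ℝ ζ (y - a) : ℝ) ≤ σ * ‖y - a‖ ^ 2}

/-- `A` is `S`-convex (segment-inclusion formulation). -/
def SConvexSet {n : ℕ} (A S : Set (EuclideanSpace ℝ (Fin n))) : Prop :=
  ∀ s ∈ S \ A, ∀ a ∈ frontier A, ∀ a' ∈ frontier A, a ≠ a' →
    segment ℝ a s ⊆ S → segment ℝ a' s ⊆ S →
    (s - a) ∉ proxNormalCone A a ∨ (s - a') ∉ proxNormalCone A a'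

section projSet

variable {n : ℕ} {A : Set (EuclideanSpace ℝ (Fin n))} {s a : EuclideanSpace ℝ (Fin n)}

theorem projSet_nonempty (hA : A.Nonempty) (hAc : IsClosed A) : (projSet A s).Nonempty := by
  obtain ⟨a, haA, ha⟩ := hAc.exists_infDist_eq_dist hA s
  exact ⟨a, haA, ha.symm⟩

theorem projSet_subsingleton_of_mem (hs : s ∈ A) : (projSet A s).Subsingleton := by
  have eq_self : ∀ a ∈ projSet A s, a = s := fun a ha =>
    (dist_eq_zero.1 (ha.2.trans (infDist_zero_of_mem hs))).symm
  exact fun a ha b hb => (eq_self a ha).trans (eq_self b hb).symm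

theorem sub_mem_proxNormalCone_of_mem_projSet (ha : a ∈ projSet A s) :
    s - a ∈ proxNormalCone A a := by
  -- `‖s - a‖ ≤ ‖s - y‖`, expanded, reads `⟪s - a, y - a⟫ ≤ ‖y - a‖² / 2`.
  refine ⟨1 / 2, by norm_num, fun y hy => ?_⟩
  have hle : ‖s - a‖ ≤ ‖s - y‖ := by
    rw [← dist_eq_norm, ← dist_eq_norm, ha.2]
    exact infDist_le_dist_of_mem hy
  have hexpand : ‖s - y‖ ^ 2 = ‖s - a‖ ^ 2 - 2 * inner ℝ (s - a) (y - a) + ‖y - a‖ ^ 2 := by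
    rw [show s - y = (s - a) - (y - a) by abel, norm_sub_sq_real]
  nlinarith [norm_nonneg (s - a)]

/-- Moving from a closest point towards `s` gets strictly closer to `s`, hence leaves `A`. -/
theorem openSegment_subset_compl_of_mem_projSet (hsA : s ∉ A) (ha : a ∈ projSet A s) :
    openSegment ℝ a s ⊆ Aᶜ := by
  have hd : 0 < dist a s := dist_pos.2 fun h => hsA (h ▸ ha.1)
  rw [openSegment_eq_image_lineMap]
  rintro _ ⟨t, ⟨ht0, ht1⟩, rfl⟩ hmem
  have hcloser : dist (AffineMap.lineMap a s t) s < dist a s := by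
    rw [dist_lineMap_right, Real.norm_eq_abs, abs_of_pos (by linarith)]
    nlinarith
  have hfar : dist a s ≤ dist (AffineMap.lineMap a s t) s := by
    rw [dist_comm a, dist_comm _ s, ha.2]
    exact infDist_le_dist_of_mem hmem
  linarith

theorem projSet_subset_frontier (hsA : s ∉ A) : projSet A s ⊆ frontier A := fun a ha => by
  rw [frontier_eq_closure_inter_closure]
  refine ⟨subset_closure ha.1, closure_mono (openSegment_subset_compl_of_mem_projSet hsA ha) ?_⟩
  exact segment_subset_closure_openSegment (left_mem_segment ℝ a s)

theorem SConvexSet.projSet_subsingleton {S : Set (EuclideanSpace ℝ (Fin n))}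
    (hconv : SConvexSet A S) (hs : s ∈ S) (hseg : (⋃ a ∈ projSet A s, segment ℝ a s) ⊆ S) :
    (projSet A s).Subsingleton := by
  by_cases hsA : s ∈ A
  · exact projSet_subsingleton_of_mem hsA
  intro a ha b hb
  by_contra hab
  have hsegS : ∀ c ∈ projSet A s, segment ℝ c s ⊆ S := fun c hc _ hx => hseg (mem_biUnion hc hx)
  rcases hconv s ⟨hs, hsA⟩ a (projSet_subset_frontier hsA ha) b (projSet_subset_frontier hsA hb)
    hab (hsegS a ha) (hsegS b hb) with h | h
  · exact h (sub_mem_proxNormalCone_of_mem_projSet ha)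
  · exact h (sub_mem_proxNormalCone_of_mem_projSet hb)

end projSet

theorem stmt_15_general {n : ℕ} (A S : Set (EuclideanSpace ℝ (Fin n))) (hA : A.Nonempty)
    (hAc : IsClosed A) (hconv : SConvexSet A S)
    (s : EuclideanSpace ℝ (Fin n)) (hs : s ∈ S)
    (hseg : (⋃ a ∈ projSet A s, segment ℝ a s) ⊆ S) :
    ∃! a, a ∈ projSet A s := by
  obtain ⟨a, ha⟩ := projSet_nonempty (s := s) hA hAc
  exact ⟨a, ha, fun b hb => hconv.projSet_subsingleton hs hseg hb ha⟩

theorem stmt_15 {n : ℕ} (A S : Set (EuclideanSpace ℝ (Fin n))) (hA : A.Nonempty)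
    (hAc : IsClosed A) (hAS : A ⊆ S) (hconv : SConvexSet A S)
    (s : EuclideanSpace ℝ (Fin n)) (hs : s ∈ S)
    (hseg : (⋃ a ∈ projSet A s, segment ℝ a s) ⊆ S) :
    ∃! a, a ∈ projSet A s :=
  stmt_15_general A S hA hAc hconv s hs hseg
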